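/- Suppose W_n − k ~ Binomial(n − k − 1, p) where k is a positive integer with k ≥ p/(1−p) and 0 < p < 1. Then |E[log W_n] − log(np)| ≤ 1/k + k/(np). -/

import Mathlib

/-!
Write `W = J + k` with `J ~ Bin(m, p)`, `m = n - k - 1`, and `q = 1 - p`. Jensen's inequality and
`log x ≤ x - 1` give `E log W - log (np) ≤ E W / (np) - 1 = (mp + k) / (np) - 1 ≤ k / (np)`.
Applying `log x ≤ x - 1` to `np / W` instead gives `log (np) - E log W ≤ np E[1/W] - 1`, and since
`1 / (j + k) = ∫₀¹ t ^ (j + k - 1) dt`, the binomial theorem turns `E[1/W]` into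
`∫₀¹ (q + pt) ^ m t ^ (k - 1) dt ≤ ∫₀¹ (q + pt) ^ (m + k - 1) dt ≤ 1 / (p (m + k))`,
whence `np E[1/W] - 1 ≤ 1 / (m + k) ≤ 1 / k`.
-/

open Finset Real

section WeightedSum

variable {ι : Type*} {s : Finset ι} {w x : ι → ℝ}

theorem sum_mul_log_sub_log_le (hw : ∀ i ∈ s, 0 ≤ w i) (hw1 : ∑ i ∈ s, w i = 1)
    (hx : ∀ i ∈ s, 0 < x i) {c : ℝ} (hc : 0 < c) :
    ∑ i ∈ s, w i * log (x i) - log c ≤ (∑ i ∈ s, w i * x i) / c - 1 := by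
  have hjensen : ∑ i ∈ s, w i * log (x i) ≤ log (∑ i ∈ s, w i * x i) := by
    simpa only [smul_eq_mul] using strictConcaveOn_log_Ioi.concaveOn.le_map_sum hw hw1 hx
  have hmean : 0 < ∑ i ∈ s, w i * x i := by
    obtain ⟨i, hi, hwi⟩ := exists_ne_zero_of_sum_ne_zero (hw1.trans_ne one_ne_zero)
    refine sum_pos' (fun j hj => mul_nonneg (hw j hj) (hx j hj).le) ⟨i, hi, ?_⟩
    exact mul_pos ((hw i hi).lt_of_ne' hwi) (hx i hi)
  have hlog := log_le_sub_one_of_pos (div_pos hmean hc)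
  rw [log_div hmean.ne' hc.ne'] at hlog
  linarith

theorem log_sub_sum_mul_log_le (hw : ∀ i ∈ s, 0 ≤ w i) (hw1 : ∑ i ∈ s, w i = 1)
    (hx : ∀ i ∈ s, 0 < x i) {c : ℝ} (hc : 0 < c) :
    log c - ∑ i ∈ s, w i * log (x i) ≤ c * ∑ i ∈ s, w i / x i - 1 := by
  have hterm : ∀ i ∈ s, w i * (log c - log (x i)) ≤ c * (w i / x i) - w i := fun i hi => by
    have hlog := log_le_sub_one_of_pos (div_pos hc (hx i hi))
    rw [log_div hc.ne' (hx i hi).ne'] at hlog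
    calc w i * (log c - log (x i)) ≤ w i * (c / x i - 1) :=
          mul_le_mul_of_nonneg_left hlog (hw i hi)
      _ = c * (w i / x i) - w i := by ring
  calc log c - ∑ i ∈ s, w i * log (x i) = ∑ i ∈ s, w i * (log c - log (x i)) := by
        rw [sum_congr rfl fun i _ => mul_sub (w i) _ _, sum_sub_distrib, ← sum_mul, hw1, one_mul]
    _ ≤ ∑ i ∈ s, (c * (w i / x i) - w i) := sum_le_sum hterm
    _ = c * ∑ i ∈ s, w i / x i - 1 := by rw [sum_sub_distrib, ← mul_sum, hw1]

end WeightedSum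

noncomputable def binomWeight (m : ℕ) (p : ℝ) (j : ℕ) : ℝ :=
  m.choose j * p ^ j * (1 - p) ^ (m - j)

section Binomial

variable {m : ℕ} {p : ℝ}

theorem binomWeight_nonneg (hp0 : 0 ≤ p) (hp1 : p ≤ 1) (j : ℕ) : 0 ≤ binomWeight m p j := by
  unfold binomWeight
  have : 0 ≤ 1 - p := by linarith
  positivity

theorem sum_binomWeight_mul_pow (m : ℕ) (p t : ℝ) :
    ∑ j ∈ range (m + 1), binomWeight m p j * t ^ j = (p * t + (1 - p)) ^ m := by
  rw [add_pow]
  exact sum_congr rfl fun j _ => by unfold binomWeight; ring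

theorem sum_binomWeight (m : ℕ) (p : ℝ) : ∑ j ∈ range (m + 1), binomWeight m p j = 1 := by
  simpa using sum_binomWeight_mul_pow m p 1

theorem sum_binomWeight_mul_cast (m : ℕ) (p : ℝ) :
    ∑ j ∈ range (m + 1), binomWeight m p j * j = m * p := by
  cases m with
  | zero => simp
  | succ m =>
    have hshift : ∀ i ∈ range (m + 1), binomWeight (m + 1) p (i + 1) * ((i + 1 : ℕ) : ℝ)
        = (m + 1) * p * binomWeight m p i := fun i _ => by
      have hchoose : ((m + 1 : ℝ)) * m.choose i = (m + 1).choose (i + 1) * ((i : ℝ) + 1) := by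
        exact_mod_cast Nat.add_one_mul_choose_eq m i
      unfold binomWeight
      rw [Nat.add_sub_add_right]
      push_cast
      linear_combination (-(p ^ (i + 1) * (1 - p) ^ (m - i))) * hchoose
    rw [sum_range_succ', sum_congr rfl hshift, ← mul_sum, sum_binomWeight]
    push_cast
    ring

theorem binomWeight_div_add_eq_integral {k : ℕ} (hk : 1 ≤ k) (j : ℕ) :
    binomWeight m p j / (j + k) = ∫ t in (0 : ℝ)..1, binomWeight m p j * t ^ (j + k - 1) := by
  have hexp : ((j + k - 1 : ℕ) : ℝ) + 1 = j + k := by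
    rw [Nat.cast_sub (by omega)]
    push_cast
    ring
  rw [intervalIntegral.integral_const_mul, integral_pow, hexp, Nat.sub_add_cancel (by omega),
    one_pow, zero_pow (by omega), sub_zero, mul_one_div]

theorem integral_add_mul_pow_le {N : ℕ} (hp : 0 < p) (hp1 : p ≤ 1) :
    ∫ t in (0 : ℝ)..1, ((1 - p) + p * t) ^ N ≤ 1 / (p * (N + 1)) := by
  rw [intervalIntegral.integral_comp_add_mul (fun x => x ^ N) hp.ne', integral_pow]
  have hq : 0 ≤ (1 - p) ^ (N + 1) := pow_nonneg (by linarith) _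
  rw [smul_eq_mul, mul_zero, add_zero, mul_one, sub_add_cancel, one_pow, ← div_eq_inv_mul,
    div_div, mul_comm _ p, div_le_div_iff_of_pos_right (by positivity)]
  linarith

theorem sum_binomWeight_div_add_le {k : ℕ} (hp : 0 < p) (hp1 : p ≤ 1) (hk : 1 ≤ k) :
    ∑ j ∈ range (m + 1), binomWeight m p j / (j + k) ≤ 1 / (p * (m + k)) := by
  have hgen : ∀ t : ℝ, ∑ j ∈ range (m + 1), binomWeight m p j * t ^ (j + k - 1)
      = ((1 - p) + p * t) ^ m * t ^ (k - 1) := fun t => by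
    simp_rw [Nat.add_sub_assoc hk, pow_add, ← mul_assoc, ← sum_mul, sum_binomWeight_mul_pow,
      add_comm (p * t)]
  have hdom : ∀ t ∈ Set.Icc (0 : ℝ) 1,
      ((1 - p) + p * t) ^ m * t ^ (k - 1) ≤ ((1 - p) + p * t) ^ (m + (k - 1)) := by
    rintro t ⟨ht0, ht1⟩
    rw [pow_add]
    gcongr
    nlinarith
  have hcont : Continuous fun t : ℝ => (1 - p) + p * t := by fun_prop
  calc ∑ j ∈ range (m + 1), binomWeight m p j / (j + k)
      = ∫ t in (0 : ℝ)..1, ((1 - p) + p * t) ^ m * t ^ (k - 1) := by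
        simp_rw [binomWeight_div_add_eq_integral hk, ← hgen]
        rw [intervalIntegral.integral_finsetSum]
        exact fun j _ => (continuous_const.mul (continuous_pow _)).intervalIntegrable _ _
    _ ≤ ∫ t in (0 : ℝ)..1, ((1 - p) + p * t) ^ (m + (k - 1)) :=
        intervalIntegral.integral_mono_on zero_le_one
          ((hcont.pow _).mul (continuous_pow _) |>.intervalIntegrable _ _)
          ((hcont.pow _).intervalIntegrable _ _) hdom
    _ ≤ 1 / (p * ((m + (k - 1) : ℕ) + 1)) := integral_add_mul_pow_le hp hp1
    _ = 1 / (p * (m + k)) := by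
        rw [← Nat.add_sub_assoc hk, Nat.cast_sub (by omega)]
        push_cast
        ring

theorem sum_binomWeight_mul_log_sub_log_le {k : ℕ} (hp : 0 < p) (hp1 : p ≤ 1) (hk : 1 ≤ k) :
    ∑ j ∈ range (m + 1), binomWeight m p j * log (j + k) - log ((m + k + 1 : ℕ) * p)
      ≤ k / ((m + k + 1 : ℕ) * p) := by
  have hnp : (0 : ℝ) < (m + k + 1 : ℕ) * p := by positivity
  have hmean : ∑ j ∈ range (m + 1), binomWeight m p j * (j + k) = m * p + k := by
    simp_rw [mul_add, sum_add_distrib, sum_binomWeight_mul_cast, ← sum_mul, sum_binomWeight,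
      one_mul]
  have hnum : m * p + k - (m + k + 1 : ℕ) * p ≤ k := by push_cast; nlinarith
  calc _ ≤ (m * p + k) / ((m + k + 1 : ℕ) * p) - 1 :=
        hmean ▸ sum_mul_log_sub_log_le (fun j _ => binomWeight_nonneg hp.le hp1 j)
          (sum_binomWeight m p) (fun j _ => by positivity) hnp
    _ ≤ k / ((m + k + 1 : ℕ) * p) := by
        rw [div_sub_one hnp.ne']
        exact div_le_div_of_nonneg_right hnum hnp.le

theorem log_sub_sum_binomWeight_mul_log_le {k : ℕ} (hp : 0 < p) (hp1 : p ≤ 1) (hk : 1 ≤ k) :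
    log ((m + k + 1 : ℕ) * p) - ∑ j ∈ range (m + 1), binomWeight m p j * log (j + k)
      ≤ 1 / k := by
  have hnp : (0 : ℝ) < (m + k + 1 : ℕ) * p := by positivity
  calc _ ≤ (m + k + 1 : ℕ) * p * ∑ j ∈ range (m + 1), binomWeight m p j / (j + k) - 1 :=
        log_sub_sum_mul_log_le (fun j _ => binomWeight_nonneg hp.le hp1 j)
          (sum_binomWeight m p) (fun j _ => by positivity) hnp
    _ ≤ (m + k + 1 : ℕ) * p * (1 / (p * (m + k))) - 1 := by
        gcongr
        exact sum_binomWeight_div_add_le hp hp1 hk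
    _ = 1 / (m + k) := by
        push_cast
        field_simp
        ring
    _ ≤ 1 / k := by
        gcongr
        exact le_add_of_nonneg_left m.cast_nonneg

end Binomial

theorem stmt6_general (n k : ℕ) (p : ℝ) (hp : 0 < p) (hp1 : p < 1)
    (hk : 1 ≤ k) (hkn : k + 1 < n) :
    |(∑ j ∈ Finset.range (n - k),
        ((n - k - 1).choose j : ℝ) * p ^ j * (1 - p) ^ (n - k - 1 - j) *
          Real.log (j + k)) - Real.log (n * p)|
      ≤ 1 / k + k / (n * p) := by
  obtain ⟨m, rfl⟩ : ∃ m, n = m + k + 1 := ⟨n - k - 1, by omega⟩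
  rw [show m + k + 1 - k = m + 1 by omega, Nat.add_sub_cancel]
  change |∑ j ∈ range (m + 1), binomWeight m p j * log (j + k) - _| ≤ _
  have hupper := sum_binomWeight_mul_log_sub_log_le hp hp1.le hk (m := m)
  have hlower := log_sub_sum_binomWeight_mul_log_le hp hp1.le hk (m := m)
  have : 0 ≤ (k : ℝ) / ((m + k + 1 : ℕ) * p) := by positivity
  have : 0 ≤ 1 / (k : ℝ) := by positivity
  rw [abs_sub_le_iff]
  constructor <;> linarith

/-- If `W_n − k ~ Binomial(n − k − 1, p)` with `k ≥ p/(1−p)` and `0 < p < 1`,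
then `|E[log W_n] − log(np)| ≤ 1/k + k/(np)`. -/
theorem stmt6 (n k : ℕ) (p : ℝ) (hp : 0 < p) (hp1 : p < 1)
    (hk : 1 ≤ k) (hkn : k + 1 < n) (hkp : p / (1 - p) ≤ (k : ℝ)) :
    |(∑ j ∈ Finset.range (n - k),
        ((n - k - 1).choose j : ℝ) * p ^ j * (1 - p) ^ (n - k - 1 - j) *
          Real.log (j + k)) - Real.log (n * p)|
      ≤ 1 / k + k / (n * p) :=
  stmt6_general n k p hp hp1 hk hkn
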